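/- Let V be the set of pure octonions of the real octonion algebra 𝕆, equipped with the bracket product [v,w] = v·w − w·v (which again lies in V). Let p(x₁,…,xₘ) be any element of the free nonassociative ℝ-algebra on x₁,…,xₘ. Then the image of p on the algebra (V, [·,·]) is either {0} or all of V. -/

import Mathlib

noncomputable section

/-- The real octonions: the Cayley–Dickson double of the quaternions. -/
@[ext]
structure Octo : Type where
  a : Quaternion ℝ
  b : Quaternion ℝ

namespace Octo

instance : Zero Octo := ⟨⟨0, 0⟩⟩
instance : One Octo := ⟨⟨1, 0⟩⟩
instance : Add Octo := ⟨fun u v => ⟨u.a + v.a, u.b + v.b⟩⟩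
instance : Neg Octo := ⟨fun u => ⟨-u.a, -u.b⟩⟩
instance : SMul ℝ Octo := ⟨fun r u => ⟨r • u.a, r • u.b⟩⟩
instance : Mul Octo :=
  ⟨fun u v => ⟨u.a * v.a - star v.b * u.b, v.b * u.a + u.b * star v.a⟩⟩
instance : Star Octo := ⟨fun u => ⟨star u.a, -u.b⟩⟩

@[simp] lemma zero_a : (0 : Octo).a = 0 := rfl
@[simp] lemma zero_b : (0 : Octo).b = 0 := rfl
@[simp] lemma one_a : (1 : Octo).a = 1 := rfl
@[simp] lemma one_b : (1 : Octo).b = 0 := rfl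
@[simp] lemma add_a (u v : Octo) : (u + v).a = u.a + v.a := rfl
@[simp] lemma add_b (u v : Octo) : (u + v).b = u.b + v.b := rfl
@[simp] lemma neg_a (u : Octo) : (-u).a = -u.a := rfl
@[simp] lemma neg_b (u : Octo) : (-u).b = -u.b := rfl
@[simp] lemma smul_a (r : ℝ) (u : Octo) : (r • u).a = r • u.a := rfl
@[simp] lemma smul_b (r : ℝ) (u : Octo) : (r • u).b = r • u.b := rfl
@[simp] lemma mul_a (u v : Octo) : (u * v).a = u.a * v.a - star v.b * u.b := rfl
@[simp] lemma mul_b (u v : Octo) : (u * v).b = v.b * u.a + u.b * star v.a := rfl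
@[simp] lemma star_a (u : Octo) : (star u).a = star u.a := rfl
@[simp] lemma star_b (u : Octo) : (star u).b = -u.b := rfl

instance addCommGroup : AddCommGroup Octo where
  add_assoc u v w := by refine Octo.ext ?_ ?_ <;> simp only [add_a, add_b] <;> apply add_assoc
  zero_add u := by refine Octo.ext ?_ ?_ <;> simp only [add_a, add_b, zero_a, zero_b] <;> apply zero_add
  add_zero u := by refine Octo.ext ?_ ?_ <;> simp only [add_a, add_b, zero_a, zero_b] <;> apply add_zero
  nsmul := nsmulRec
  zsmul := zsmulRec
  neg_add_cancel u := by
    refine Octo.ext ?_ ?_ <;> simp only [add_a, add_b, neg_a, neg_b, zero_a, zero_b] <;> apply neg_add_cancel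
  add_comm u v := by refine Octo.ext ?_ ?_ <;> simp only [add_a, add_b] <;> apply add_comm

lemma left_distrib' (u v w : Octo) : u * (v + w) = u * v + u * w := by
  refine Octo.ext ?_ ?_ <;> simp only [mul_a, mul_b, add_a, add_b, star_add, mul_add, add_mul] <;> abel

lemma right_distrib' (u v w : Octo) : (u + v) * w = u * w + v * w := by
  refine Octo.ext ?_ ?_ <;> simp only [mul_a, mul_b, add_a, add_b, star_add, mul_add, add_mul] <;> abel

lemma zero_mul' (u : Octo) : 0 * u = 0 := by
  refine Octo.ext ?_ ?_ <;> simp only [mul_a, mul_b, zero_a, zero_b, mul_zero, zero_mul, sub_zero,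
    add_zero, zero_add, zero_sub, neg_zero]

lemma mul_zero' (u : Octo) : u * 0 = 0 := by
  refine Octo.ext ?_ ?_ <;> simp only [mul_a, mul_b, zero_a, zero_b, mul_zero, zero_mul, sub_zero,
    add_zero, zero_add, zero_sub, neg_zero, star_zero]

instance : NonUnitalNonAssocRing Octo :=
  { Octo.addCommGroup, (inferInstance : Mul Octo) with
    left_distrib := left_distrib'
    right_distrib := right_distrib'
    zero_mul := zero_mul'
    mul_zero := mul_zero' }

instance module : Module ℝ Octo where
  one_smul u := by refine Octo.ext ?_ ?_ <;> simp only [smul_a, smul_b] <;> apply one_smul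
  mul_smul r s u := by refine Octo.ext ?_ ?_ <;> simp only [smul_a, smul_b] <;> apply mul_smul
  smul_zero r := by refine Octo.ext ?_ ?_ <;> simp only [smul_a, smul_b, zero_a, zero_b] <;> apply smul_zero
  smul_add r u v := by refine Octo.ext ?_ ?_ <;> simp only [smul_a, smul_b, add_a, add_b] <;> apply smul_add
  add_smul r s u := by refine Octo.ext ?_ ?_ <;> simp only [smul_a, smul_b, add_a, add_b] <;> apply add_smul
  zero_smul u := by refine Octo.ext ?_ ?_ <;> simp only [smul_a, smul_b, zero_a, zero_b] <;> apply zero_smul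

instance : IsScalarTower ℝ Octo Octo :=
  ⟨fun r u v => by
    show (r • u) * v = r • (u * v)
    refine Octo.ext ?_ ?_ <;>
      simp only [mul_a, mul_b, smul_a, smul_b, smul_sub, smul_add, mul_smul_comm,
        smul_mul_assoc]⟩

instance : SMulCommClass ℝ Octo Octo :=
  ⟨fun r u v => by
    show r • (u * v) = u * (r • v)
    refine Octo.ext ?_ ?_ <;>
      simp only [mul_a, mul_b, smul_a, smul_b, smul_sub, smul_add, mul_smul_comm,
        smul_mul_assoc, Quaternion.star_smul]⟩

instance : StarRing Octo where
  star_involutive u := by refine Octo.ext ?_ ?_ <;> simp only [star_a, star_b, star_star, neg_neg]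
  star_mul u v := by
    refine Octo.ext ?_ ?_ <;>
      simp only [star_a, star_b, mul_a, mul_b, star_sub, star_add, star_mul, star_star, star_neg,
        mul_neg, neg_mul, neg_add_rev, neg_neg, neg_sub] <;> abel
  star_add u v := by refine Octo.ext ?_ ?_ <;> simp only [star_a, star_b, add_a, add_b, star_add, neg_add_rev] <;> abel

instance : StarModule ℝ Octo :=
  ⟨fun r u => by
    refine Octo.ext ?_ ?_ <;> simp only [star_a, star_b, smul_a, smul_b, Quaternion.star_smul,
      star_trivial, smul_neg]⟩

/-- The set of pure octonions (trace zero). -/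
def V : Set Octo := {x : Octo | x + star x = 0}

/-- The set of scalar octonions `ℝ·1`. -/
def scalars : Set Octo := Set.range fun r : ℝ => r • (1 : Octo)

/-- `φ` is an `ℝ`-algebra automorphism of the octonions. -/
def IsAut (φ : Octo ≃ₗ[ℝ] Octo) : Prop :=
  φ 1 = 1 ∧ ∀ x y : Octo, φ (x * y) = φ x * φ y

end Octo

/-- Number of occurrences of the variable `i` in a nonassociative word. -/
def FreeMagma.degCount {X : Type*} [DecidableEq X] : FreeMagma X → X → ℕ
  | .of x, i => if x = i then 1 else 0
  | .mul w₁ w₂, i => w₁.degCount i + w₂.degCount i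

/-- A nonassociative polynomial is multilinear if every variable occurs exactly once
in each of its monomials. -/
def IsMultilinear {R : Type*} [Semiring R] {n : ℕ}
    (p : FreeNonUnitalNonAssocAlgebra R (Fin n)) : Prop :=
  ∀ w ∈ p.coeff.support, ∀ i : Fin n, w.degCount i = 1

/-- Evaluation of a nonassociative polynomial on the octonions. -/
def Octo.eval {n : ℕ} (p : FreeNonUnitalNonAssocAlgebra ℝ (Fin n)) (v : Fin n → Octo) : Octo :=
  FreeNonUnitalNonAssocAlgebra.lift ℝ v p

namespace Octo

lemma star_eq_neg_of_mem_V {x : Octo} (hx : x ∈ Octo.V) : star x = -x :=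
  eq_neg_of_add_eq_zero_right hx

/-- The pure octonions as an `ℝ`-submodule of `𝕆`. -/
def Vsub : Submodule ℝ Octo where
  carrier := Octo.V
  add_mem' := by
    intro x y hx hy
    have h : (x + y) + star (x + y) = (x + star x) + (y + star y) := by
      rw [star_add]; abel
    simp only [V, Set.mem_setOf_eq] at *
    rw [h, hx, hy, add_zero]
  zero_mem' := by simp [V]
  smul_mem' := by
    intro c x hx
    simp only [V, Set.mem_setOf_eq] at *
    rw [star_smul, star_trivial, ← smul_add, hx, smul_zero]

lemma bracket_mem_Vsub {x y : Octo} (hx : x ∈ Vsub) (hy : y ∈ Vsub) :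
    x * y - y * x ∈ Vsub := by
  have hx' : star x = -x := star_eq_neg_of_mem_V hx
  have hy' : star y = -y := star_eq_neg_of_mem_V hy
  show (x * y - y * x) + star (x * y - y * x) = 0
  rw [star_sub, star_mul, star_mul, hx', hy']
  simp only [neg_mul, mul_neg, neg_neg]
  abel

/-- The Malcev algebra of pure octonions: `V` equipped with the commutator bracket
`[v,w] = v·w − w·v`. -/
instance : Mul ↥Vsub :=
  ⟨fun u v => ⟨u.1 * v.1 - v.1 * u.1, bracket_mem_Vsub u.2 v.2⟩⟩

@[simp] lemma coe_bracket (u v : ↥Vsub) :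
    ((u * v : ↥Vsub) : Octo) = u.1 * v.1 - v.1 * u.1 := rfl

instance : NonUnitalNonAssocRing ↥Vsub :=
  { (inferInstance : AddCommGroup ↥Vsub), (inferInstance : Mul ↥Vsub) with
    left_distrib := fun u v w => Subtype.ext (by
      simp only [coe_bracket, Submodule.coe_add, mul_add, add_mul]; abel)
    right_distrib := fun u v w => Subtype.ext (by
      simp only [coe_bracket, Submodule.coe_add, mul_add, add_mul]; abel)
    zero_mul := fun u => Subtype.ext (by
      simp only [coe_bracket, ZeroMemClass.coe_zero, zero_mul, mul_zero, sub_zero])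
    mul_zero := fun u => Subtype.ext (by
      simp only [coe_bracket, ZeroMemClass.coe_zero, zero_mul, mul_zero, sub_zero]) }

instance : IsScalarTower ℝ ↥Vsub ↥Vsub :=
  ⟨fun r u v => Subtype.ext (by
    show ((r • u : ↥Vsub) : Octo) * v.1 - v.1 * ((r • u : ↥Vsub) : Octo)
        = r • (u.1 * v.1 - v.1 * u.1)
    simp only [SetLike.val_smul, smul_sub, smul_mul_assoc, mul_smul_comm])⟩

instance : SMulCommClass ℝ ↥Vsub ↥Vsub :=
  ⟨fun r u v => Subtype.ext (by
    show r • (u.1 * v.1 - v.1 * u.1)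
        = u.1 * ((r • v : ↥Vsub) : Octo) - ((r • v : ↥Vsub) : Octo) * u.1
    simp only [SetLike.val_smul, smul_sub, smul_mul_assoc, mul_smul_comm])⟩

/-- Evaluation of a nonassociative polynomial on the Malcev algebra `(V, [·,·])`. -/
def evalV {m : ℕ} (p : FreeNonUnitalNonAssocAlgebra ℝ (Fin m)) (v : Fin m → ↥Vsub) :
    ↥Vsub :=
  FreeNonUnitalNonAssocAlgebra.lift ℝ v p

end Octo

/-! Automorphisms of `𝕆` commuting with conjugation restrict to automorphisms of `(V, [·,·])`,
and evaluating `p` commutes with them, so the image of `p` is a union of orbits. The orbits are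
the spheres of `V`: conjugations by unit quaternions, `(a, b) ↦ (c a c*, d b c*)`, together with
one automorphism exchanging coordinates between the two quaternion halves, move every pure
octonion `u` to `(|u| i, 0)`. So the image is determined by the norms it attains. If `p(v) ≠ 0`,
then `t ↦ |p(t v)|²` is a nonnegative real polynomial, zero at `0` but not identically zero;
it is unbounded, so by the intermediate value theorem it attains every `r ≥ 0`. -/

open Polynomial

theorem FreeMagma.lift_smul {R X A : Type*} [CommSemiring R] [NonUnitalNonAssocSemiring A]
    [Module R A] [IsScalarTower R A A] [SMulCommClass R A A] (t : R) (v : X → A)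
    (w : FreeMagma X) : FreeMagma.lift (t • v) w = t ^ w.length • FreeMagma.lift v w := by
  induction w with
  | ih1 x => simp
  | ih2 a b iha ihb =>
    rw [map_mul, map_mul, iha, ihb, smul_mul_smul_comm, ← pow_add]
    rfl

namespace FreeNonUnitalNonAssocAlgebra

variable {R X A B : Type*} [CommSemiring R] [NonUnitalNonAssocSemiring A] [Module R A]
  [IsScalarTower R A A] [SMulCommClass R A A]

theorem lift_smul_apply (t : R) (v : X → A) (p : FreeNonUnitalNonAssocAlgebra R X) :
    lift R (t • v) p = ∑ w ∈ p.coeff.support, t ^ w.length • p.coeff w • FreeMagma.lift v w := by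
  change p.coeff.sum (fun w r => r • FreeMagma.lift (t • v) w) = _
  simp only [Finsupp.sum, FreeMagma.lift_smul, smul_comm (p.coeff _)]

theorem lift_zero : lift R (0 : X → A) = 0 :=
  hom_ext R fun x => by simp

variable [NonUnitalNonAssocSemiring B] [Module R B] [IsScalarTower R B B] [SMulCommClass R B B]

theorem lift_comp (φ : A →ₙₐ[R] B) (v : X → A) : lift R (φ ∘ v) = φ.comp (lift R v) :=
  hom_ext R fun x => by simp

end FreeNonUnitalNonAssocAlgebra

theorem LinearMap.exists_eval_eq_apply_sum_pow_smul {R M ι : Type*} [CommSemiring R]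
    [AddCommMonoid M] [Module R M] (B : M →ₗ[R] M →ₗ[R] R) (s : Finset ι) (n : ι → ℕ)
    (a : ι → M) : ∃ q : R[X], ∀ t : R,
      q.eval t = B (∑ i ∈ s, t ^ n i • a i) (∑ i ∈ s, t ^ n i • a i) := by
  refine ⟨∑ i ∈ s, ∑ j ∈ s, C (B (a i) (a j)) * X ^ (n i + n j), fun t => ?_⟩
  simp only [map_sum, map_smul, LinearMap.coe_sum, Finset.sum_apply, LinearMap.smul_apply,
    smul_eq_mul, eval_finsetSum, eval_mul, eval_C, eval_pow, eval_X, Finset.mul_sum]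
  rw [Finset.sum_comm]
  refine Finset.sum_congr rfl fun i _ => Finset.sum_congr rfl fun j _ => ?_
  ring

theorem Polynomial.Ici_zero_subset_range_eval {q : ℝ[X]} (hq : q ≠ 0) (h0 : q.eval 0 = 0)
    (hnonneg : ∀ t, 0 ≤ q.eval t) : Set.Ici 0 ⊆ Set.range q.eval := by
  intro r hr
  have hdeg : 0 < q.degree := by
    by_contra! h
    rw [eq_C_of_degree_le_zero h, coeff_zero_eq_eval_zero, h0, C_0] at hq
    exact hq rfl
  obtain ⟨T, hrT, hT⟩ := ((q.abs_tendsto_atTop hdeg).eventually_ge_atTop r |>.and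
    (Filter.eventually_ge_atTop 0)).exists
  rw [abs_of_nonneg (hnonneg T)] at hrT
  have hr' : r ∈ Set.Icc (q.eval 0) (q.eval T) := by rw [h0]; exact ⟨hr, hrT⟩
  obtain ⟨t, -, ht⟩ := intermediate_value_Icc hT q.continuous.continuousOn hr'
  exact ⟨t, ht⟩

namespace Quaternion

theorem inv_norm_smul_mem_unitary {y : ℍ[ℝ]} (hy : y ≠ 0) : ‖y‖⁻¹ • y ∈ unitary ℍ[ℝ] := by
  have hny : ‖y‖ ≠ 0 := norm_ne_zero_iff.mpr hy
  have hnormSq : normSq y = ‖y‖ ^ 2 := by rw [normSq_eq_norm_mul_self, sq]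
  have hstar : star (‖y‖⁻¹ • y) = ‖y‖⁻¹ • star y := by simp
  refine Unitary.mem_iff.mpr ⟨?_, ?_⟩
  · rw [hstar, smul_mul_smul_comm, star_mul_self, hnormSq, smul_coe]
    field_simp; rfl
  · rw [hstar, smul_mul_smul_comm, self_mul_star, hnormSq, smul_coe]
    field_simp; rfl

theorem exists_mem_unitary_mul_eq_norm (y : ℍ[ℝ]) :
    ∃ p ∈ unitary ℍ[ℝ], p * y = (‖y‖ : ℍ[ℝ]) := by
  rcases eq_or_ne y 0 with rfl | hy
  · exact ⟨1, one_mem _, by simp⟩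
  refine ⟨‖star y‖⁻¹ • star y, inv_norm_smul_mem_unitary (star_ne_zero.mpr hy), ?_⟩
  rw [norm_star, smul_mul_assoc, star_mul_self, normSq_eq_norm_mul_self, smul_coe]
  field_simp [norm_ne_zero_iff.mpr hy]

theorem exists_mem_unitary_mul_mul_star_eq {x : ℍ[ℝ]} (hx : x.re = 0) :
    ∃ c ∈ unitary ℍ[ℝ], c * x * star c = ⟨0, ‖x‖, 0, 0⟩ := by
  set n := ‖x‖
  have hn : n ^ 2 = x.imI ^ 2 + x.imJ ^ 2 + x.imK ^ 2 := by
    rw [sq, ← normSq_eq_norm_mul_self, normSq_def', hx]; ring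
  by_cases hxi : x = ⟨0, -n, 0, 0⟩
  · set j : ℍ[ℝ] := ⟨0, 0, 1, 0⟩
    have hj : j ∈ unitary ℍ[ℝ] := by
      rw [Unitary.mem_iff, star_mul_self, self_mul_star, normSq_def']; norm_num [j]
    refine ⟨j, hj, ?_⟩
    -- Expand products before unfolding `j`: a literal `⟨_, _, _, _⟩` has type
    -- `QuaternionAlgebra ℝ (-1) 0 (-1)`, on which the `Quaternion` simp lemmas do not fire.
    ext <;> simp only [re_mul, imI_mul, imJ_mul, imK_mul, re_star, imI_star, imJ_star,
      imK_star] <;> simp [j, hxi]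
  set i : ℍ[ℝ] := ⟨0, 1, 0, 0⟩
  set w : ℍ[ℝ] := ⟨0, n, 0, 0⟩
  -- `d = n - i x` intertwines `x` with `w = n i`, because `x² = -n²`.
  set d : ℍ[ℝ] := n - i * x with hd
  have hdx : d * x = w * d := by
    ext <;> simp only [hd, re_mul, imI_mul, imJ_mul, imK_mul, re_sub, imI_sub, imJ_sub, imK_sub,
      re_coe, imI_coe, imJ_coe, imK_coe] <;> simp [i, w, hx]
    · ring
    · linear_combination (-1 : ℝ) * hn
    · ring
    · ring
  have hd0 : d ≠ 0 := fun h => hxi <| by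
    have hre := congrArg QuaternionAlgebra.re h
    have himJ := congrArg QuaternionAlgebra.imJ h
    have himK := congrArg QuaternionAlgebra.imK h
    simp only [hd, re_mul, imJ_mul, imK_mul, re_sub, imJ_sub, imK_sub,
      re_coe, imJ_coe, imK_coe] at hre himJ himK
    simp [i, hx] at hre himJ himK
    ext <;> simp [hx] <;> linarith
  set c := ‖d‖⁻¹ • d
  have hc : c ∈ unitary ℍ[ℝ] := inv_norm_smul_mem_unitary hd0
  have hcx : c * x = w * c := by rw [smul_mul_assoc, hdx, mul_smul_comm]
  refine ⟨c, hc, ?_⟩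
  rw [hcx, mul_assoc, Unitary.mul_star_self_of_mem hc, mul_one]

end Quaternion

namespace Octo

theorem mem_Vsub_iff {x : Octo} : x ∈ Vsub ↔ x.a.re = 0 := by
  change x + star x = 0 ↔ _
  rw [← Quaternion.star_eq_neg, ← add_eq_zero_iff_eq_neg']
  constructor
  · exact fun h => congrArg Octo.a h
  · exact fun h => Octo.ext h (by simp)

theorem map_mem_Vsub (φ : Octo ≃⋆ₐ[ℝ] Octo) {x : Octo} (hx : x ∈ Vsub) : φ x ∈ Vsub := by
  change φ x + star (φ x) = 0
  rw [← map_star, ← map_add, hx.out, map_zero]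

def restrictVsub (φ : Octo ≃⋆ₐ[ℝ] Octo) : Vsub →ₙₐ[ℝ] Vsub where
  toFun x := ⟨φ x, map_mem_Vsub φ x.2⟩
  map_smul' r x := Subtype.ext (map_smul φ r x.1)
  map_zero' := Subtype.ext (map_zero φ)
  map_add' x y := Subtype.ext (map_add φ x.1 y.1)
  map_mul' x y := Subtype.ext (by simp only [coe_bracket, map_sub, map_mul])

def conjAut {c p : Quaternion ℝ} (hc : c ∈ unitary (Quaternion ℝ))
    (hp : p ∈ unitary (Quaternion ℝ)) : Octo ≃⋆ₐ[ℝ] Octo :=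
  have hc₁ (z : Quaternion ℝ) : star c * (c * z) = z := by
    rw [← mul_assoc, Unitary.star_mul_self_of_mem hc, one_mul]
  have hc₂ (z : Quaternion ℝ) : c * (star c * z) = z := by
    rw [← mul_assoc, Unitary.mul_star_self_of_mem hc, one_mul]
  have hp₁ (z : Quaternion ℝ) : star p * (p * z) = z := by
    rw [← mul_assoc, Unitary.star_mul_self_of_mem hp, one_mul]
  have hp₂ (z : Quaternion ℝ) : p * (star p * z) = z := by
    rw [← mul_assoc, Unitary.mul_star_self_of_mem hp, one_mul]
  { toFun u := ⟨c * u.a * star c, p * u.b * star c⟩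
    invFun u := ⟨star c * u.a * c, star p * u.b * c⟩
    left_inv u := by
      ext : 1 <;> simp only [mul_assoc, hc₁, hp₁, Unitary.star_mul_self_of_mem hc, mul_one]
    right_inv u := by
      ext : 1 <;> simp only [mul_assoc, hc₂, hp₂, Unitary.mul_star_self_of_mem hc, mul_one]
    map_mul' u v := by
      ext : 1 <;> simp only [mul_a, mul_b, star_mul, star_star, mul_sub, sub_mul, mul_add, add_mul,
        mul_assoc, hc₁, hp₁]
    map_add' u v := by ext : 1 <;> simp only [add_a, add_b, mul_add, add_mul]
    map_star' u := by
      ext : 1 <;> simp only [star_a, star_b, star_mul, star_star, mul_neg, neg_mul, mul_assoc]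
    map_smul' r u := by ext : 1 <;> simp only [smul_a, smul_b, mul_smul_comm, smul_mul_assoc] }

@[simp] theorem conjAut_apply {c p : Quaternion ℝ} (hc : c ∈ unitary (Quaternion ℝ))
    (hp : p ∈ unitary (Quaternion ℝ)) (u : Octo) : conjAut hc hp u = ⟨c * u.a * star c, p * u.b * star c⟩ := rfl

/-- Writing `a = α + β j` and `b = γ + δ j` with `α, β, γ, δ ∈ ℂ`, this is
`(α + β j, γ + δ j) ↦ (α + γ j, β - δ j)`. -/
@[simps]
def swap (u : Octo) : Octo :=
  ⟨⟨u.a.re, u.a.imI, u.b.re, u.b.imI⟩, ⟨u.a.imJ, u.a.imK, -u.b.imJ, -u.b.imK⟩⟩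

def swapAut : Octo ≃⋆ₐ[ℝ] Octo where
  toFun := swap
  invFun := swap
  left_inv u := by ext <;> simp
  right_inv u := by ext <;> simp
  map_mul' u v := by
    ext <;> simp [Quaternion.re_mul, Quaternion.imI_mul, Quaternion.imJ_mul, Quaternion.imK_mul] <;>
      ring
  map_add' u v := by ext <;> simp <;> ring
  map_star' u := by ext <;> simp
  map_smul' r u := by ext <;> simp

def normSq (x : Octo) : ℝ := ‖x.a‖ ^ 2 + ‖x.b‖ ^ 2

theorem normSq_nonneg (x : Octo) : 0 ≤ normSq x := by unfold normSq; positivity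

theorem normSq_eq_zero {x : Octo} : normSq x = 0 ↔ x = 0 := by
  rw [normSq, add_eq_zero_iff_of_nonneg (by positivity) (by positivity)]
  simp [Octo.ext_iff]

def innerₗ : Octo →ₗ[ℝ] Octo →ₗ[ℝ] ℝ :=
  LinearMap.mk₂ ℝ (fun x y => inner ℝ x.a y.a + inner ℝ x.b y.b)
    (fun x x' y => by simp only [add_a, add_b, inner_add_left]; ring)
    (fun r x y => by simp only [smul_a, smul_b, real_inner_smul_left]; ring)
    (fun x y y' => by simp only [add_a, add_b, inner_add_right]; ring)
    (fun r x y => by simp only [smul_a, smul_b, real_inner_smul_right]; ring)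

theorem innerₗ_self (x : Octo) : innerₗ x x = normSq x := by
  simp [innerₗ, normSq]

theorem exists_starAlgEquiv_apply_eq_canonical {u : Octo} (hu : u ∈ Vsub) :
    ∃ φ : Octo ≃⋆ₐ[ℝ] Octo, φ u = ⟨⟨0, √(normSq u), 0, 0⟩, 0⟩ := by
  obtain ⟨x, y⟩ := u
  obtain ⟨c, hc, hcx⟩ := Quaternion.exists_mem_unitary_mul_mul_star_eq (mem_Vsub_iff.mp hu)
  obtain ⟨p, hp, hpy⟩ := Quaternion.exists_mem_unitary_mul_eq_norm (y * star c)
  have hy : ‖y * star c‖ = ‖y‖ := by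
    rw [norm_mul, norm_star, CStarRing.norm_of_mem_unitary hc, mul_one]
  set w : Quaternion ℝ := ⟨0, ‖x‖, ‖y‖, 0⟩
  obtain ⟨c', hc', hcw⟩ := Quaternion.exists_mem_unitary_mul_mul_star_eq (x := w) rfl
  have hw : ‖w‖ = √(normSq ⟨x, y⟩) := by
    rw [← Real.sqrt_sq (norm_nonneg w), sq, ← Quaternion.normSq_eq_norm_mul_self,
      Quaternion.normSq_def']
    simp [w, normSq]
  refine ⟨(conjAut hc hp).trans (swapAut.trans (conjAut hc' (one_mem _))), ?_⟩
  have hconj : conjAut hc hp ⟨x, y⟩ = ⟨⟨0, ‖x‖, 0, 0⟩, (‖y‖ : Quaternion ℝ)⟩ := by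
    rw [conjAut_apply]; ext : 1
    · exact hcx
    · simp only [mul_assoc, hpy, hy]
  have hswap : swapAut ⟨⟨0, ‖x‖, 0, 0⟩, (‖y‖ : Quaternion ℝ)⟩ = ⟨w, 0⟩ := by
    ext <;> simp [swapAut, w] <;> rfl
  have hrot : conjAut hc' (one_mem _) ⟨w, 0⟩ = ⟨⟨0, √(normSq ⟨x, y⟩), 0, 0⟩, 0⟩ := by
    rw [conjAut_apply, hcw, hw]; simp
  simp only [StarAlgEquiv.trans_apply, hconj, hswap, hrot]

theorem exists_starAlgEquiv_apply_eq {u v : Octo} (hu : u ∈ Vsub) (hv : v ∈ Vsub)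
    (h : normSq u = normSq v) : ∃ φ : Octo ≃⋆ₐ[ℝ] Octo, φ u = v := by
  obtain ⟨φ, hφ⟩ := exists_starAlgEquiv_apply_eq_canonical hu
  obtain ⟨ψ, hψ⟩ := exists_starAlgEquiv_apply_eq_canonical hv
  refine ⟨φ.trans ψ.symm, ?_⟩
  rw [StarAlgEquiv.trans_apply, hφ, h, ← hψ, StarAlgEquiv.symm_apply_apply]


variable {m : ℕ}

theorem evalV_comp (φ : Vsub →ₙₐ[ℝ] Vsub) (p : FreeNonUnitalNonAssocAlgebra ℝ (Fin m))
    (v : Fin m → Vsub) : evalV p (φ ∘ v) = φ (evalV p v) := by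
  simp only [evalV, FreeNonUnitalNonAssocAlgebra.lift_comp, NonUnitalAlgHom.comp_apply]

theorem exists_normSq_evalV_smul_eq {p : FreeNonUnitalNonAssocAlgebra ℝ (Fin m)}
    {v : Fin m → Vsub} (hv : evalV p v ≠ 0) {r : ℝ} (hr : 0 ≤ r) :
    ∃ t : ℝ, normSq (evalV p (t • v) : Octo) = r := by
  obtain ⟨q, hq⟩ := innerₗ.exists_eval_eq_apply_sum_pow_smul p.coeff.support FreeMagma.length
    fun w => ((p.coeff w • FreeMagma.lift v w : Vsub) : Octo)
  have hq' (t : ℝ) : q.eval t = normSq (evalV p (t • v) : Octo) := by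
    rw [hq, evalV, FreeNonUnitalNonAssocAlgebra.lift_smul_apply, ← innerₗ_self]
    simp only [Submodule.coe_sum, Submodule.coe_smul]
  have h0 : q.eval 0 = 0 := by
    rw [hq', zero_smul, evalV, FreeNonUnitalNonAssocAlgebra.lift_zero,
      NonUnitalAlgHom.zero_apply, ZeroMemClass.coe_zero, normSq_eq_zero]
  have hq0 : q ≠ 0 := by
    rintro rfl
    apply hv
    simpa [normSq_eq_zero] using (hq' 1).symm
  obtain ⟨t, ht⟩ := q.Ici_zero_subset_range_eval hq0 h0 (fun t => hq' t ▸ normSq_nonneg _) hr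
  exact ⟨t, (hq' t).symm.trans ht⟩

end Octo

/-- The image of any nonassociative polynomial on the Malcev algebra
of pure octonions (with the commutator bracket) is either `{0}` or all of `V`. -/
theorem polynomial_image_on_malcev_pure_octonions {m : ℕ}
    (p : FreeNonUnitalNonAssocAlgebra ℝ (Fin m)) :
    (Set.range fun v : Fin m → ↥Octo.Vsub => Octo.evalV p v) = {0} ∨
    (Set.range fun v : Fin m → ↥Octo.Vsub => Octo.evalV p v) = Set.univ := by
  by_cases hzero : ∀ v, Octo.evalV p v = 0
  · exact Or.inl (Set.range_eq_singleton_iff.mpr hzero)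
  obtain ⟨v, hv⟩ := not_forall.mp hzero
  right
  refine Set.eq_univ_of_forall fun z => ?_
  obtain ⟨t, ht⟩ := Octo.exists_normSq_evalV_smul_eq hv (Octo.normSq_nonneg z)
  obtain ⟨φ, hφ⟩ := Octo.exists_starAlgEquiv_apply_eq (Octo.evalV p (t • v)).2 z.2 ht
  exact ⟨_, (Octo.evalV_comp (Octo.restrictVsub φ) p (t • v)).trans (Subtype.ext hφ)⟩
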